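/- Let 𝔸 = A_{v_1} ⊕ ⋯ ⊕ A_{v_s} be a complete sum of conic modules and let E = End_R(𝔸). For every v ∈ ℝ^d, the right E-module P_v = Hom_R(𝔸, A_v), with E acting by precomposition, is a finitely generated projective E-module, and P_v is indecomposable (it is nonzero and is not the internal direct sum of two nonzero E-submodules). -/

import Mathlib

open Set

set_option synthInstance.maxHeartbeats 1000000
set_option maxHeartbeats 4000000

universe u

noncomputable section

/-- The embedding of the lattice `ℤ^d` into `ℝ^d`. -/
def ιZ (d : ℕ) (m : Fin d → ℤ) : Fin d → ℝ := fun j => (m j : ℝ)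

/-- The lattice points of the translated cone `C + v`, where
`C = {x | ∀ i, 0 ≤ n i x}`. -/
def latticePts {d t : ℕ} (n : Fin t → ((Fin d → ℝ) →ₗ[ℝ] ℝ)) (v : Fin d → ℝ) :
    Set (Fin d → ℤ) :=
  {m | ∀ i, 0 ≤ n i (ιZ d m - v)}

/-- The toric algebra `R = k[C ∩ ℤ^d]`: the `k`-subalgebra of the Laurent
polynomial algebra `L = AddMonoidAlgebra k (Fin d → ℤ)` spanned (equivalently,
generated, since the monomial set is closed under multiplication and contains `1`)
by the monomials `x^m` with `m ∈ C ∩ ℤ^d`. -/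
def toricR (k : Type) [Field k] (d t : ℕ) (n : Fin t → ((Fin d → ℝ) →ₗ[ℝ] ℝ)) :
    Subalgebra k (AddMonoidAlgebra k (Fin d → ℤ)) :=
  Algebra.adjoin k
    {f | ∃ m : Fin d → ℤ, (∀ i, 0 ≤ n i (ιZ d m)) ∧ f = AddMonoidAlgebra.single m 1}

/-- The conic module `A_v`: the `R`-submodule of `L` spanned by the monomials `x^m`
with `m ∈ (C + v) ∩ ℤ^d`. -/
def conicA (k : Type) [Field k] (d t : ℕ) (n : Fin t → ((Fin d → ℝ) →ₗ[ℝ] ℝ))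
    (v : Fin d → ℝ) :
    Submodule ↥(toricR k d t n) (AddMonoidAlgebra k (Fin d → ℤ)) :=
  Submodule.span ↥(toricR k d t n)
    {f | ∃ m : Fin d → ℤ, (∀ i, 0 ≤ n i (ιZ d m - v)) ∧ f = AddMonoidAlgebra.single m 1}

/-- The endomorphism ring `End_R(M)` of a module `M` over a commutative ring `R`
(that is, `Module.End R M`, wrapped so that the ring structure is found smoothly). -/
def EndAlg (R M : Type*) [CommRing R] [AddCommGroup M] [Module R M] : Type _ :=
  Module.End R M

noncomputable instance (R M : Type*) [CommRing R] [AddCommGroup M] [Module R M] :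
    Ring (EndAlg R M) :=
  Module.End.instRing

/-- `ProjDimLE E n M` : the left `E`-module `M` has projective dimension at most `n`
(there is a projective resolution of length `n`, presented via iterated syzygies). -/
def ProjDimLE (E : Type*) [Ring E] :
    ℕ → ∀ (M : Type u) [AddCommGroup M] [Module E M], Prop
  | 0, M, _, _ => Module.Projective E M
  | n + 1, M, _, _ =>
    ∃ (P : Type u) (_ : AddCommGroup P) (_ : Module E P) (f : P →ₗ[E] M),
      Function.Surjective f ∧ Module.Projective E P ∧
        ProjDimLE E n ↥(LinearMap.ker f)

/-- The `R`-module `Hom_R(M, N)` of `R`-linear maps (wrapped so that the right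
`End_R(M)`-module structure by precomposition can be registered smoothly). -/
def HomMod (R M N : Type*) [CommRing R] [AddCommGroup M] [AddCommGroup N]
    [Module R M] [Module R N] : Type _ :=
  M →ₗ[R] N

noncomputable instance (R M N : Type*) [CommRing R] [AddCommGroup M] [AddCommGroup N]
    [Module R M] [Module R N] : AddCommGroup (HomMod R M N) :=
  LinearMap.addCommGroup

/-- Precomposition, as a ring homomorphism from the opposite ring of `End_R(M)` to
the endomorphisms of the additive group `Hom_R(M, N)`. -/
def precompHom (R M N : Type*) [CommRing R] [AddCommGroup M] [AddCommGroup N]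
    [Module R M] [Module R N] :
    (EndAlg R M)ᵐᵒᵖ →+* Module.End R (M →ₗ[R] N) where
  toFun e :=
    { toFun := fun f => f ∘ₗ (MulOpposite.unop e : Module.End R M)
      map_add' := fun f g => LinearMap.add_comp _ _ _
      map_smul' := fun c f => LinearMap.smul_comp c f _ }
  map_one' := by ext f x; rfl
  map_mul' := by intro a b; ext f x; rfl
  map_zero' := by ext f x; exact map_zero f
  map_add' := by
    intro a b; ext f x
    exact map_add f _ _

/-- The right `End_R(M)`-module structure on `Hom_R(M, N)` given by precomposition
(as a left module over the opposite ring). -/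
noncomputable instance rightEndModule (R M N : Type*) [CommRing R] [AddCommGroup M]
    [AddCommGroup N] [Module R M] [Module R N] :
    Module (EndAlg R M)ᵐᵒᵖ (HomMod R M N) :=
  Module.compHom (M →ₗ[R] N) (precompHom R M N)

/-!
Every `R`-linear endomorphism `g` of a conic module `A_w` commutes with the monomials of `R`.
A lattice point in the interior of `C` lets one move any lattice point of `C + w` to any other
by monomials of `R`, so `g` is multiplication by a single Laurent polynomial `c`; since `L` is a
domain, `g` idempotent forces `c = 0` or `c = 1`.

Completeness gives `A_w ≅ A_{v_j}`, so `A_w` is a direct summand of `𝔸`, and then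
`P_w = Hom(𝔸, A_w)` is a direct summand of `Hom(𝔸, 𝔸) ≅ E`: it is finitely generated projective.
Every `E`-linear endomorphism of `P_w` is postcomposition with an endomorphism of `A_w`, so `P_w`
has no idempotent endomorphisms other than `0` and `1`, i.e. it is indecomposable.
-/

section Geometry

variable {d t : ℕ} (n : Fin t → ((Fin d → ℝ) →ₗ[ℝ] ℝ))

lemma ιZ_add (m m' : Fin d → ℤ) : ιZ d (m + m') = ιZ d m + ιZ d m' := by
  funext j; simp [ιZ]

lemma ιZ_nsmul (N : ℕ) (m : Fin d → ℤ) : ιZ d (N • m) = (N : ℝ) • ιZ d m := by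
  funext j; simp [ιZ]

lemma exists_forall_pos_of_interior_nonempty (hne : ∀ i, n i ≠ 0)
    (hfull : (interior {x | ∀ i, 0 ≤ n i x}).Nonempty) : ∃ x, ∀ i, 0 < n i x := by
  obtain ⟨x, hx⟩ := hfull
  refine ⟨x, fun i => ?_⟩
  have hopen : IsOpen (n i '' interior {x | ∀ i, 0 ≤ n i x}) :=
    (n i).isOpenMap_of_finiteDimensional (LinearMap.surjective_of_ne_zero (hne i)) _
      isOpen_interior
  have hsub : n i '' interior {x | ∀ i, 0 ≤ n i x} ⊆ Ici 0 :=
    image_subset_iff.2 (interior_subset.trans fun y hy => hy i)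
  simpa only [interior_Ici, mem_Ioi] using hopen.subset_interior_iff.2 hsub ⟨x, hx, rfl⟩

lemma exists_lattice_forall_pos (hx : ∃ x, ∀ i, 0 < n i x) :
    ∃ a : Fin d → ℤ, ∀ i, 0 < n i (ιZ d a) := by
  obtain ⟨x, hx⟩ := hx
  have hK : IsOpen {y : Fin d → ℝ | ∀ i, 0 < n i y} := by
    simp only [ofPred_forall]
    exact isOpen_iInter_of_finite fun i =>
      isOpen_lt continuous_const (n i).continuous_of_finiteDimensional
  obtain ⟨ε, hε, hball⟩ := Metric.isOpen_iff.1 hK x hx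
  obtain ⟨N, hN⟩ := exists_nat_gt ε⁻¹
  have hNpos : (0 : ℝ) < N := (inv_pos.2 hε).trans hN
  refine ⟨fun j => round (N * x j), fun i => ?_⟩
  -- `N⁻¹ • round (N • x)` is within `1 / (2N) < ε` of `x` in the sup metric
  have hmem : (N : ℝ)⁻¹ • ιZ d (fun j => round (N * x j)) ∈ Metric.ball x ε := by
    rw [Metric.mem_ball, dist_pi_lt_iff hε]
    intro j
    have hround := abs_sub_round ((N : ℝ) * x j)
    have hεN : (N : ℝ)⁻¹ < ε := (inv_lt_comm₀ hε hNpos).1 hN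
    rw [Real.dist_eq, Pi.smul_apply, smul_eq_mul, ιZ,
      show (N : ℝ)⁻¹ * round ((N : ℝ) * x j) - x j
        = (N : ℝ)⁻¹ * -((N : ℝ) * x j - round ((N : ℝ) * x j)) by field_simp; ring,
      abs_mul, abs_neg, abs_of_pos (inv_pos.2 hNpos)]
    nlinarith [inv_pos.2 hNpos]
  have := hball hmem i
  rw [map_smul, smul_eq_mul] at this
  exact (mul_pos_iff_of_pos_left (inv_pos.2 hNpos)).1 this

variable {n}

lemma exists_nat_forall_le_mul {a : Fin d → ℝ} (ha : ∀ i, 0 < n i a) (y : Fin d → ℝ) :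
    ∃ N : ℕ, ∀ i, n i y ≤ N * n i a :=
  (Filter.eventually_all.2 fun i =>
    (tendsto_natCast_atTop_atTop.eventually_ge_atTop (n i y / n i a)).mono
      fun _ hN => (div_le_iff₀ (ha i)).1 hN).exists

lemma latticePts_nonempty {a : Fin d → ℤ} (ha : ∀ i, 0 < n i (ιZ d a)) (w : Fin d → ℝ) :
    (latticePts n w).Nonempty := by
  obtain ⟨N, hN⟩ := exists_nat_forall_le_mul ha w
  exact ⟨N • a, fun i => by
    rw [map_sub, ιZ_nsmul, map_smul, smul_eq_mul]; linarith [hN i]⟩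

lemma exists_mem_cone_add_mem_cone {a : Fin d → ℤ} (ha : ∀ i, 0 < n i (ιZ d a))
    (r : Fin d → ℤ) :
    ∃ c : Fin d → ℤ, (∀ i, 0 ≤ n i (ιZ d c)) ∧ ∀ i, 0 ≤ n i (ιZ d (c + r)) := by
  obtain ⟨N, hN⟩ := exists_nat_forall_le_mul ha (-ιZ d r)
  refine ⟨N • a, fun i => ?_, fun i => ?_⟩
  · rw [ιZ_nsmul, map_smul, smul_eq_mul]; exact mul_nonneg N.cast_nonneg (ha i).le
  · have := hN i
    rw [map_neg] at this
    rw [ιZ_add, map_add, ιZ_nsmul, map_smul, smul_eq_mul]; linarith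

end Geometry

section ConicModule

open AddMonoidAlgebra

variable (k : Type) [Field k] {d t : ℕ} {n : Fin t → ((Fin d → ℝ) →ₗ[ℝ] ℝ)}

lemma single_mem_toricR {m : Fin d → ℤ} (hm : ∀ i, 0 ≤ n i (ιZ d m)) :
    single m (1 : k) ∈ toricR k d t n :=
  Algebra.subset_adjoin ⟨m, hm, rfl⟩

lemma single_mem_conicA {w : Fin d → ℝ} {m : Fin d → ℤ} (hm : m ∈ latticePts n w) :
    single m (1 : k) ∈ conicA k d t n w :=
  Submodule.subset_span ⟨m, hm, rfl⟩

lemma single_mul_mem_conicA {u w : Fin d → ℝ} {m : Fin d → ℤ}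
    (h : ∀ p ∈ latticePts n u, m + p ∈ latticePts n w) {x : k[Fin d → ℤ]}
    (hx : x ∈ conicA k d t n u) : single m 1 * x ∈ conicA k d t n w := by
  have hle : conicA k d t n u ≤
      (conicA k d t n w).comap (LinearMap.mulLeft (toricR k d t n) (single m 1)) :=
    Submodule.span_le.2 <| by
      rintro _ ⟨p, hp, rfl⟩
      simpa [single_mul_single] using single_mem_conicA k (h p hp)
  exact hle hx

def conicAEquivOfTranslate {u w : Fin d → ℝ} (m : Fin d → ℤ)
    (h : latticePts n w = (m + ·) '' latticePts n u) :
    conicA k d t n u ≃ₗ[toricR k d t n] conicA k d t n w :=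
  LinearEquiv.ofLinearMap
    ((LinearMap.mulLeft _ (single m 1)).restrict fun _ =>
      single_mul_mem_conicA k fun p hp => h ▸ mem_image_of_mem _ hp)
    ((LinearMap.mulLeft _ (single (-m) 1)).restrict fun _ =>
      single_mul_mem_conicA k fun q hq => by
        obtain ⟨p, hp, rfl⟩ := h ▸ hq
        simpa using hp)
    (LinearMap.ext fun x => Subtype.ext <| show single m 1 * (single (-m) 1 * x.1) = x.1 by
      rw [← mul_assoc, single_mul_single, add_neg_cancel, one_mul, ← one_def, one_mul])
    (LinearMap.ext fun x => Subtype.ext <| show single (-m) 1 * (single m 1 * x.1) = x.1 by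
      rw [← mul_assoc, single_mul_single, neg_add_cancel, one_mul, ← one_def, one_mul])

lemma nontrivial_conicA {w : Fin d → ℝ} (hw : (latticePts n w).Nonempty) :
    Nontrivial (conicA k d t n w) := by
  obtain ⟨p, hp⟩ := hw
  exact nontrivial_of_ne ⟨single p 1, single_mem_conicA k hp⟩ 0 (by simp)

variable {k}

lemma conicA_exists_apply_eq_mul {a : Fin d → ℤ} (ha : ∀ i, 0 < n i (ιZ d a)) {w : Fin d → ℝ}
    {p₀ : Fin d → ℤ} (hp₀ : p₀ ∈ latticePts n w)
    (g : Module.End (toricR k d t n) (conicA k d t n w)) :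
    ∃ c : k[Fin d → ℤ], ∀ x : conicA k d t n w, (g x : k[Fin d → ℤ]) = c * x := by
  set c := (g ⟨single p₀ 1, single_mem_conicA k hp₀⟩ : k[Fin d → ℤ]) * single (-p₀) 1 with hc
  have hmon : ∀ q (hq : q ∈ latticePts n w),
      (g ⟨single q 1, single_mem_conicA k hq⟩ : k[Fin d → ℤ]) = c * single q 1 := by
    intro q hq
    obtain ⟨b, hb, hbq⟩ := exists_mem_cone_add_mem_cone ha (q - p₀)
    have hshift : (⟨single b 1, single_mem_toricR k hb⟩ : toricR k d t n) •
          (⟨single q 1, single_mem_conicA k hq⟩ : conicA k d t n w) =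
        (⟨single (b + (q - p₀)) 1, single_mem_toricR k hbq⟩ : toricR k d t n) •
          ⟨single p₀ 1, single_mem_conicA k hp₀⟩ := by
      ext1
      simp only [SetLike.val_smul, Subalgebra.smul_def, smul_eq_mul, single_mul_single, mul_one]
      congr 1; abel
    have hg := congrArg (fun y => (g y : k[Fin d → ℤ])) hshift
    simp only [map_smul, SetLike.val_smul, Subalgebra.smul_def, smul_eq_mul] at hg
    refine mul_left_cancel₀ (single_ne_zero.2 one_ne_zero : single b (1 : k) ≠ 0) ?_
    rw [hg, hc, mul_left_comm, mul_assoc, single_mul_single, single_mul_single, mul_one,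
      mul_one, mul_comm]
    congr 2
    abel
  refine ⟨c, fun x => ?_⟩
  have hext : (conicA k d t n w).subtype ∘ₗ g =
      LinearMap.mulLeft (toricR k d t n) c ∘ₗ (conicA k d t n w).subtype :=
    LinearMap.ext_on Submodule.span_span_coe_preimage
      (by rintro ⟨_, _⟩ ⟨q, hq, rfl⟩; exact hmon q hq)
  exact congrArg (· x) hext

lemma conicA_eq_zero_or_one_of_isIdempotentElem {a : Fin d → ℤ} (ha : ∀ i, 0 < n i (ιZ d a))
    {w : Fin d → ℝ} (g : Module.End (toricR k d t n) (conicA k d t n w))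
    (hg : IsIdempotentElem g) : g = 0 ∨ g = 1 := by
  obtain ⟨p₀, hp₀⟩ := latticePts_nonempty ha w
  obtain ⟨c, hc⟩ := conicA_exists_apply_eq_mul ha hp₀ g
  set x₀ : conicA k d t n w := ⟨single p₀ 1, single_mem_conicA k hp₀⟩
  have hcc : IsIdempotentElem c := by
    refine mul_right_cancel₀ (single_ne_zero.2 one_ne_zero : single p₀ (1 : k) ≠ 0) ?_
    have := congrArg (fun y => (y x₀ : k[Fin d → ℤ])) hg
    simp only [Module.End.mul_apply, hc] at this
    rw [mul_assoc, this]
  rcases IsIdempotentElem.iff_eq_zero_or_one.1 hcc with h | h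
  · exact Or.inl (LinearMap.ext fun x => Subtype.ext (by simp [hc, h]))
  · exact Or.inr (LinearMap.ext fun x => Subtype.ext (by simp [hc, h]))

end ConicModule

lemma Submodule.eq_bot_or_eq_bot_of_isCompl {S P : Type*} [Ring S] [AddCommGroup P] [Module S P]
    (hP : ∀ φ : Module.End S P, IsIdempotentElem φ → φ = 0 ∨ φ = 1)
    {U V : Submodule S P} (hUV : IsCompl U V) : U = ⊥ ∨ V = ⊥ := by
  rcases hP _ (isIdempotentElem_projection hUV) with h | h
  · left; rw [← range_projection hUV, h, LinearMap.range_zero]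
  · right; rw [← ker_projection hUV, h, Module.End.one_eq_id, LinearMap.ker_id]

namespace HomMod

variable {R M N N' : Type*} [CommRing R] [AddCommGroup M] [AddCommGroup N] [AddCommGroup N']
  [Module R M] [Module R N] [Module R N']

def ofLinearMap (f : M →ₗ[R] N) : HomMod R M N := f

def toLinearMap (f : HomMod R M N) : M →ₗ[R] N := f

def postcomp (g : N →ₗ[R] N') : HomMod R M N →ₗ[(EndAlg R M)ᵐᵒᵖ] HomMod R M N' where
  toFun f := ofLinearMap (g ∘ₗ toLinearMap f)
  map_add' f f' := LinearMap.comp_add f f' g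
  map_smul' _ _ := rfl

def selfEquiv : HomMod R M M ≃ₗ[(EndAlg R M)ᵐᵒᵖ] (EndAlg R M)ᵐᵒᵖ where
  toFun f := MulOpposite.op (α := EndAlg R M) (toLinearMap f)
  invFun c := ofLinearMap c.unop
  map_add' _ _ := rfl
  map_smul' _ _ := rfl
  left_inv _ := rfl
  right_inv _ := rfl

variable {e : M →ₗ[R] N} {ι : N →ₗ[R] M}

lemma postcomp_comp_postcomp (h : Function.LeftInverse e ι) :
    postcomp e ∘ₗ postcomp ι = (LinearMap.id : HomMod R M N →ₗ[(EndAlg R M)ᵐᵒᵖ] _) :=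
  LinearMap.ext fun _ => LinearMap.ext fun _ => h _

lemma finite_of_leftInverse (h : Function.LeftInverse e ι) :
    Module.Finite (EndAlg R M)ᵐᵒᵖ (HomMod R M N) :=
  have := Module.Finite.equiv (selfEquiv (R := R) (M := M)).symm
  Module.Finite.of_surjective (postcomp e) fun f =>
    ⟨postcomp ι f, LinearMap.congr_fun (postcomp_comp_postcomp h) f⟩

lemma projective_of_leftInverse (h : Function.LeftInverse e ι) :
    Module.Projective (EndAlg R M)ᵐᵒᵖ (HomMod R M N) :=
  have := Module.Projective.of_equiv (selfEquiv (R := R) (M := M)).symm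
  Module.Projective.of_split (postcomp ι) (postcomp e) (postcomp_comp_postcomp h)

lemma exists_ne_zero_of_leftInverse [Nontrivial N] (h : Function.LeftInverse e ι) :
    ∃ f : HomMod R M N, f ≠ 0 := by
  obtain ⟨y, hy⟩ := exists_ne (0 : N)
  exact ⟨ofLinearMap e, fun he => hy (by rw [← h y]; exact LinearMap.congr_fun he (ι y))⟩

-- `f = (ι ∘ f) • e`, so an `E`-linear `φ` is postcomposition with `φ e ∘ ι`
lemma apply_eq_comp (h : Function.LeftInverse e ι)
    (φ : Module.End (EndAlg R M)ᵐᵒᵖ (HomMod R M N)) (f : HomMod R M N) :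
    φ f = ofLinearMap ((toLinearMap (φ (ofLinearMap e)) ∘ₗ ι) ∘ₗ toLinearMap f) := by
  have hf : f = MulOpposite.op (α := EndAlg R M) (ι ∘ₗ toLinearMap f) • ofLinearMap e :=
    LinearMap.ext fun _ => (h _).symm
  calc φ f = φ (MulOpposite.op (α := EndAlg R M) (ι ∘ₗ toLinearMap f) • ofLinearMap e) :=
        congrArg φ hf
    _ = _ := map_smul _ _ _

lemma eq_zero_or_one_of_isIdempotentElem (h : Function.LeftInverse e ι)
    (hN : ∀ g : Module.End R N, IsIdempotentElem g → g = 0 ∨ g = 1)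
    (φ : Module.End (EndAlg R M)ᵐᵒᵖ (HomMod R M N)) (hφ : IsIdempotentElem φ) :
    φ = 0 ∨ φ = 1 := by
  set g := toLinearMap (φ (ofLinearMap e)) ∘ₗ ι with hg_def
  have hg : IsIdempotentElem g :=
    calc g * g = toLinearMap (ofLinearMap ((toLinearMap (φ (ofLinearMap e)) ∘ₗ ι) ∘ₗ
          toLinearMap (φ (ofLinearMap e)))) ∘ₗ ι := rfl
      _ = toLinearMap (φ (φ (ofLinearMap e))) ∘ₗ ι := by rw [← apply_eq_comp h]
      _ = g := by rw [← Module.End.mul_apply, hφ.eq]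
  rcases hN g hg with h0 | h1
  · exact Or.inl (LinearMap.ext fun f => by rw [apply_eq_comp h, ← hg_def, h0]; rfl)
  · exact Or.inr (LinearMap.ext fun f => by rw [apply_eq_comp h, ← hg_def, h1]; rfl)

end HomMod

theorem stmt_12_general
    (d t : ℕ)
    (n : Fin t → ((Fin d → ℝ) →ₗ[ℝ] ℝ))
    (hne : ∀ i, n i ≠ 0)
    (C : Set (Fin d → ℝ)) (hC : C = {x | ∀ i, 0 ≤ n i x})
    (hfull : (interior C).Nonempty)
    (k : Type) [Field k]
    (s : ℕ) (v : Fin s → Fin d → ℝ)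
    (hcomplete : ∀ w : Fin d → ℝ, ∃ (j : Fin s) (m : Fin d → ℤ),
      latticePts n w = (fun m' => m + m') '' latticePts n (v j)) :
    ∀ w : Fin d → ℝ,
      Module.Finite (EndAlg ↥(toricR k d t n) (∀ j : Fin s, ↥(conicA k d t n (v j))))ᵐᵒᵖ
        (HomMod ↥(toricR k d t n) (∀ j : Fin s, ↥(conicA k d t n (v j))) ↥(conicA k d t n w)) ∧
      Module.Projective (EndAlg ↥(toricR k d t n) (∀ j : Fin s, ↥(conicA k d t n (v j))))ᵐᵒᵖ
        (HomMod ↥(toricR k d t n) (∀ j : Fin s, ↥(conicA k d t n (v j))) ↥(conicA k d t n w)) ∧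
      (∃ f : HomMod ↥(toricR k d t n) (∀ j : Fin s, ↥(conicA k d t n (v j))) ↥(conicA k d t n w),
        f ≠ 0) ∧
      (∀ U V : Submodule (EndAlg ↥(toricR k d t n) (∀ j : Fin s, ↥(conicA k d t n (v j))))ᵐᵒᵖ
          (HomMod ↥(toricR k d t n) (∀ j : Fin s, ↥(conicA k d t n (v j))) ↥(conicA k d t n w)),
        U ⊓ V = ⊥ → U ⊔ V = ⊤ → U = ⊥ ∨ V = ⊥) := by
  intro w
  obtain ⟨a, ha⟩ := exists_lattice_forall_pos n
    (exists_forall_pos_of_interior_nonempty n hne (hC ▸ hfull))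
  obtain ⟨j, m, hm⟩ := hcomplete w
  let σ := conicAEquivOfTranslate k m hm
  have h : Function.LeftInverse (σ.toLinearMap ∘ₗ LinearMap.proj j)
      (LinearMap.single _ (fun j => conicA k d t n (v j)) j ∘ₗ σ.symm.toLinearMap) :=
    fun x => by simp
  have := nontrivial_conicA k (latticePts_nonempty ha w)
  refine ⟨HomMod.finite_of_leftInverse h, HomMod.projective_of_leftInverse h,
    HomMod.exists_ne_zero_of_leftInverse h, fun U V hUV hUV' => ?_⟩
  exact Submodule.eq_bot_or_eq_bot_of_isCompl
    (HomMod.eq_zero_or_one_of_isIdempotentElem h (conicA_eq_zero_or_one_of_isIdempotentElem ha))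
    ⟨disjoint_iff.2 hUV, codisjoint_iff.2 hUV'⟩

/-- for a complete sum of conic modules `𝔸` and `E = End_R(𝔸)`, the
right `E`-module `P_v = Hom_R(𝔸, A_v)` (with `E` acting by precomposition, i.e. as a
left module over `Eᵐᵒᵖ`) is a finitely generated projective indecomposable module. -/
theorem stmt_12
    (d t : ℕ) (hd : 1 ≤ d)
    (n : Fin t → ((Fin d → ℝ) →ₗ[ℝ] ℝ))
    (hne : ∀ i, n i ≠ 0)
    (hint : ∀ i (m : Fin d → ℤ), ∃ z : ℤ, n i (ιZ d m) = z)
    (hprim : ∀ i (z : ℤ), ∃ m : Fin d → ℤ, n i (ιZ d m) = z)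
    (C : Set (Fin d → ℝ)) (hC : C = {x | ∀ i, 0 ≤ n i x})
    (hfull : (interior C).Nonempty)
    (hpointed : Submodule.span ℝ (Set.range n) = ⊤)
    (hirr : ∀ i, C ⊂ {x | ∀ j, j ≠ i → 0 ≤ n j x})
    (k : Type) [Field k]
    (s : ℕ) (v : Fin s → Fin d → ℝ)
    (hcomplete : ∀ w : Fin d → ℝ, ∃ (j : Fin s) (m : Fin d → ℤ),
      latticePts n w = (fun m' => m + m') '' latticePts n (v j)) :
    ∀ w : Fin d → ℝ,
      Module.Finite (EndAlg ↥(toricR k d t n) (∀ j : Fin s, ↥(conicA k d t n (v j))))ᵐᵒᵖ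
        (HomMod ↥(toricR k d t n) (∀ j : Fin s, ↥(conicA k d t n (v j))) ↥(conicA k d t n w)) ∧
      Module.Projective (EndAlg ↥(toricR k d t n) (∀ j : Fin s, ↥(conicA k d t n (v j))))ᵐᵒᵖ
        (HomMod ↥(toricR k d t n) (∀ j : Fin s, ↥(conicA k d t n (v j))) ↥(conicA k d t n w)) ∧
      (∃ f : HomMod ↥(toricR k d t n) (∀ j : Fin s, ↥(conicA k d t n (v j))) ↥(conicA k d t n w),
        f ≠ 0) ∧
      (∀ U V : Submodule (EndAlg ↥(toricR k d t n) (∀ j : Fin s, ↥(conicA k d t n (v j))))ᵐᵒᵖ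
          (HomMod ↥(toricR k d t n) (∀ j : Fin s, ↥(conicA k d t n (v j))) ↥(conicA k d t n w)),
        U ⊓ V = ⊥ → U ⊔ V = ⊤ → U = ⊥ ∨ V = ⊥) :=
  stmt_12_general d t n hne C hC hfull k s v hcomplete
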